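/- Let B be a skew brace. Then B is annihilator nilpotent if and only if there exists a positive integer c such that Γ_[c](B) = 0. -/
import Mathlib


/-- A skew brace: a type with two group structures `(B,+)` and `(B,∘)`
(the multiplicative group is written with `*`) sharing the same underlying set,
such that `a ∘ (b + c) = a ∘ b - a + a ∘ c`. -/
class SkewBrace (B : Type*) extends AddGroup B, Group B where
  circ_add : ∀ a b c : B, a * (b + c) = a * b - a + a * c

namespace SkewBrace

variable {B : Type*} [SkewBrace B]

/-- `lam a b = -a + a ∘ b`, i.e. `λ_a(b)`. -/
def lam (a b : B) : B := -a + a * b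

/-- `a * b` (the star operation) `= λ_a(b) - b = -a + a ∘ b - b`. -/
def starOp (a b : B) : B := -a + a * b - b

/-- `X * Y` : the additive subgroup generated by all `x * y`, `x ∈ X`, `y ∈ Y`,
regarded as a set. -/
def starSpan (X Y : Set B) : Set B :=
  (AddSubgroup.closure {z : B | ∃ x ∈ X, ∃ y ∈ Y, z = starOp x y} : AddSubgroup B)

/-- `[X,Y]₊` : the additive subgroup generated by all additive commutators
`x + y - x - y`, `x ∈ X`, `y ∈ Y`, regarded as a set. -/
def addCommSpan (X Y : Set B) : Set B :=
  (AddSubgroup.closure {z : B | ∃ x ∈ X, ∃ y ∈ Y, z = x + y - x - y} : AddSubgroup B)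

/-- A sub skew brace: a subset containing `0` and closed under both group
operations and both inverses. -/
def IsSubSkewBrace (S : Set B) : Prop :=
  0 ∈ S ∧ (∀ a ∈ S, ∀ b ∈ S, a + b ∈ S) ∧ (∀ a ∈ S, -a ∈ S) ∧
    (∀ a ∈ S, ∀ b ∈ S, a * b ∈ S) ∧ (∀ a ∈ S, a⁻¹ ∈ S)

/-- An ideal: a sub skew brace that is normal in `(B,+)` and in `(B,∘)` and
invariant under all `λ_a`. -/
def IsIdeal (S : Set B) : Prop :=
  IsSubSkewBrace S ∧ (∀ a : B, ∀ i ∈ S, a + i - a ∈ S) ∧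
    (∀ a : B, ∀ i ∈ S, a * i * a⁻¹ ∈ S) ∧ (∀ a : B, ∀ i ∈ S, lam a i ∈ S)

/-- The annihilator `Ann(B) = {x | x∘a = a∘x = x+a = a+x for all a}`. -/
def annSet (B : Type*) [SkewBrace B] : Set B :=
  {x | ∀ a : B, x * a = a * x ∧ x * a = x + a ∧ x + a = a + x}

/-- The annihilator series: `Ann₀(B) = 0` and `Ann_{n+1}(B)` is the preimage of
`Ann(B/Annₙ(B))` under the quotient map; membership is expressed via coset
equalities modulo `Annₙ(B)`. -/
def annSeries (B : Type*) [SkewBrace B] : ℕ → Set B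
  | 0 => {0}
  | n + 1 => {x | ∀ a : B,
      x * a - a * x ∈ annSeries B n ∧
      x * a - (x + a) ∈ annSeries B n ∧
      (x + a) - (a + x) ∈ annSeries B n}

/-- `B` is annihilator nilpotent if `Annₙ(B) = B` for some `n`. -/
def AnnNilpotent (B : Type*) [SkewBrace B] : Prop :=
  ∃ n : ℕ, annSeries B n = Set.univ

/-- `leftPow B n` is `B^{n+1}`: `B¹ = B`, `B^{n+1} = B * Bⁿ`. -/
def leftPow (B : Type*) [SkewBrace B] : ℕ → Set B
  | 0 => Set.univ
  | n + 1 => starSpan Set.univ (leftPow B n)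

/-- `rightPow B n` is `B⁽ⁿ⁺¹⁾`: `B⁽¹⁾ = B`, `B⁽ⁿ⁺¹⁾ = B⁽ⁿ⁾ * B`. -/
def rightPow (B : Type*) [SkewBrace B] : ℕ → Set B
  | 0 => Set.univ
  | n + 1 => starSpan (rightPow B n) Set.univ

/-- `B` is left nilpotent if `Bⁿ = 0` for some `n ≥ 1`. -/
def LeftNilpotent (B : Type*) [SkewBrace B] : Prop :=
  ∃ n : ℕ, leftPow B n = ({0} : Set B)

/-- `B` is right nilpotent if `B⁽ⁿ⁾ = 0` for some `n ≥ 1`. -/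
def RightNilpotent (B : Type*) [SkewBrace B] : Prop :=
  ∃ n : ℕ, rightPow B n = ({0} : Set B)

/-- `strongPow B n` is `B^[n+1]`: `B^[1] = B`, and `B^[n+1]` is the additive
subgroup generated by `⋃_{i=1}^{n} B^[i] * B^[n+1-i]`. -/
def strongPow (B : Type*) [SkewBrace B] : ℕ → Set B
  | 0 => Set.univ
  | n + 1 => (AddSubgroup.closure (⋃ j : Fin (n + 1),
      {z : B | ∃ x ∈ strongPow B j.1, ∃ y ∈ strongPow B (n - j.1), z = starOp x y}) :
        AddSubgroup B)
  decreasing_by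
  · exact j.isLt
  · omega

/-- `B` is strongly nilpotent if `B^[n] = 0` for some `n ≥ 1`. -/
def StronglyNilpotent (B : Type*) [SkewBrace B] : Prop :=
  ∃ n : ℕ, strongPow B n = ({0} : Set B)

/-- `gammaAux B n` is `Γ_[n+1](B)`: `Γ_[1](B) = B` and, for `n ≥ 2`, `Γ_[n](B)` is
the additive subgroup generated by the sets `Γ_[i](B) * Γ_[n-i](B)` and
`[Γ_[i](B), Γ_[n-i](B)]₊` for `1 ≤ i ≤ n-1`. -/
def gammaAux (B : Type*) [SkewBrace B] : ℕ → Set B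
  | 0 => Set.univ
  | n + 1 => (AddSubgroup.closure (⋃ j : Fin (n + 1),
      {z : B | ∃ x ∈ gammaAux B j.1, ∃ y ∈ gammaAux B (n - j.1),
        z = starOp x y ∨ z = x + y - x - y}) : AddSubgroup B)
  decreasing_by
  · exact j.isLt
  · omega

/-- `Γ_[n](B)` for `n ≥ 1` (one-based indexing as in the paper). -/
def gammaBr (B : Type*) [SkewBrace B] (n : ℕ) : Set B := gammaAux B (n - 1)

/-- `B` is finitely generated as a skew brace: there is a finite subset whose
smallest containing sub skew brace is `B` itself. -/
def SBFinitelyGenerated (B : Type*) [SkewBrace B] : Prop :=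
  ∃ S : Set B, S.Finite ∧ ∀ T : Set B, IsSubSkewBrace T → S ⊆ T → T = Set.univ

/-- `B` satisfies the ascending chain condition on sub skew braces. -/
def ACCSubSkewBrace (B : Type*) [SkewBrace B] : Prop :=
  ∀ f : ℕ → Set B, (∀ n, IsSubSkewBrace (f n)) → (∀ n, f n ⊆ f (n + 1)) →
    ∃ N : ℕ, ∀ n, N ≤ n → f n = f N



section Basics
variable {B : Type*} [SkewBrace B]

lemma circ_zero (a : B) : a * (0:B) = a := by
  have h := SkewBrace.circ_add a 0 0
  rw [add_zero] at h
  have h2 : a * (0:B) + 0 = a * 0 + (-a + a * 0) := by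
    rw [add_zero]; nth_rewrite 1 [h]; rw [sub_eq_add_neg, add_assoc]
  have h3 : (0:B) = -a + a * 0 := add_left_cancel h2
  have := congrArg (a + ·) h3
  simpa using this.symm

lemma one_eq_zero : (1 : B) = 0 := by
  have := circ_zero (1 : B)
  rw [one_mul] at this; exact this.symm

lemma zero_circ (a : B) : (0:B) * a = a := by
  rw [← one_eq_zero, one_mul]

lemma circ_eq (a b : B) : a * b = a + lam a b := by
  simp [lam, add_neg_cancel_left]

lemma lam_add (a b c : B) : lam a (b + c) = lam a b + lam a c := by
  simp [lam, SkewBrace.circ_add, sub_eq_add_neg, add_assoc]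

lemma lam_zero (a : B) : lam a 0 = 0 := by simp [lam, circ_zero]

lemma lam_neg (a b : B) : lam a (-b) = - lam a b := by
  have h := lam_add a b (-b)
  rw [add_neg_cancel, lam_zero] at h
  exact eq_neg_of_add_eq_zero_right h.symm

lemma lam_one (b : B) : lam 1 b = b := by
  rw [lam, one_mul, one_eq_zero, neg_zero, zero_add]

lemma lam_circ (a b c : B) : lam (a * b) c = lam a (lam b c) := by
  rw [show lam b c = -b + b * c from rfl, lam_add, lam_neg]
  simp [lam, mul_assoc, sub_eq_add_neg, neg_add_rev, add_assoc]

lemma circ_eq_star (a b : B) : a * b = a + starOp a b + b := by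
  simp [starOp, sub_eq_add_neg, add_assoc, add_neg_cancel_left]

end Basics
section Ideals
set_option linter.unusedSectionVars false
variable {B : Type*} [SkewBrace B] {N : Set B}

lemma IsIdeal.zero_mem (h : IsIdeal N) : (0:B) ∈ N := h.1.1
lemma IsIdeal.add_mem (h : IsIdeal N) {a b : B} (ha : a ∈ N) (hb : b ∈ N) : a + b ∈ N :=
  h.1.2.1 a ha b hb
lemma IsIdeal.neg_mem (h : IsIdeal N) {a : B} (ha : a ∈ N) : -a ∈ N := h.1.2.2.1 a ha
lemma IsIdeal.circ_mem (h : IsIdeal N) {a b : B} (ha : a ∈ N) (hb : b ∈ N) : a * b ∈ N :=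
  h.1.2.2.2.1 a ha b hb
lemma IsIdeal.inv_mem (h : IsIdeal N) {a : B} (ha : a ∈ N) : a⁻¹ ∈ N := h.1.2.2.2.2 a ha
lemma IsIdeal.addConj (h : IsIdeal N) (a : B) {i : B} (hi : i ∈ N) : a + i - a ∈ N :=
  h.2.1 a i hi
lemma IsIdeal.circConj (h : IsIdeal N) (a : B) {i : B} (hi : i ∈ N) : a * i * a⁻¹ ∈ N :=
  h.2.2.1 a i hi
lemma IsIdeal.lam_mem (h : IsIdeal N) (a : B) {i : B} (hi : i ∈ N) : lam a i ∈ N :=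
  h.2.2.2 a i hi

/-- The additive subgroup attached to an ideal. -/
def idealSubgroup (h : IsIdeal N) : AddSubgroup B where
  carrier := N
  zero_mem' := h.zero_mem
  add_mem' := fun ha hb => h.add_mem ha hb
  neg_mem' := fun ha => h.neg_mem ha

lemma closure_subset_of_isIdeal (h : IsIdeal N) {X : Set B} (hX : X ⊆ N) :
    (AddSubgroup.closure X : Set B) ⊆ N := by
  intro z hz
  exact (AddSubgroup.closure_le (idealSubgroup h)).2 hX hz

/-- congruence modulo an ideal -/
def Rel (N : Set B) (x y : B) : Prop := x - y ∈ N

variable (hI : IsIdeal N)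
include hI

lemma rel_refl (x : B) : Rel N x x := by simp [Rel, hI.zero_mem]
lemma rel_symm {x y : B} (h : Rel N x y) : Rel N y x := by
  have := hI.neg_mem h; rwa [neg_sub] at this
lemma rel_trans {x y z : B} (h1 : Rel N x y) (h2 : Rel N y z) : Rel N x z := by
  have := hI.add_mem h1 h2
  rwa [show x - y + (y - z) = x - z by simp [sub_eq_add_neg, add_assoc]] at this
lemma rel_of_mem {n : B} (h : n ∈ N) : Rel N n 0 := by simpa [Rel] using h
lemma mem_of_rel_zero {n : B} (h : Rel N n 0) : n ∈ N := by simpa [Rel] using h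
lemma rel_add_right {x y : B} (a : B) (h : Rel N x y) : Rel N (x + a) (y + a) := by
  have : x + a - (y + a) = x - y := by simp [sub_eq_add_neg, neg_add_rev, add_assoc]
  rwa [Rel, this]
lemma rel_add_left {x y : B} (a : B) (h : Rel N x y) : Rel N (a + x) (a + y) := by
  have h2 := hI.addConj a h
  have : a + (x - y) - a = a + x - (a + y) := by
    simp [sub_eq_add_neg, neg_add_rev, add_assoc]
  rwa [this] at h2
lemma rel_neg {x y : B} (h : Rel N x y) : Rel N (-x) (-y) := by
  have h2 := hI.addConj (-x) (hI.neg_mem h)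
  have : -x + -(x - y) - -x = -x - -y := by
    simp [sub_eq_add_neg, neg_add_rev, add_assoc]
  rwa [this] at h2
lemma neg_add_mem {x y : B} (h : Rel N x y) : -y + x ∈ N := by
  have h2 := hI.addConj (-y) h
  have : -y + (x - y) - -y = -y + x := by
    simp [sub_eq_add_neg, neg_add_rev, add_assoc]
  rwa [this] at h2
lemma rel_circ_left {x y : B} (a : B) (h : Rel N x y) : Rel N (a * x) (a * y) := by
  have hn : -y + x ∈ N := neg_add_mem hI h
  have hx : x = y + (-y + x) := by simp [add_neg_cancel_left]
  have : a * x = a * y + lam a (-y + x) := by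
    nth_rewrite 1 [hx]
    rw [SkewBrace.circ_add, lam, sub_eq_add_neg, add_assoc]
  rw [Rel, this]
  have h3 := hI.addConj (a * y) (hI.lam_mem a hn)
  simpa [sub_eq_add_neg] using h3
lemma circ_inv_mem {x y : B} (h : Rel N x y) : y⁻¹ * x ∈ N := by
  have hn : -y + x ∈ N := neg_add_mem hI h
  have hx : x = y + (-y + x) := by simp [add_neg_cancel_left]
  have : y⁻¹ * x = lam y⁻¹ (-y + x) := by
    nth_rewrite 1 [hx]
    rw [SkewBrace.circ_add, inv_mul_cancel, one_eq_zero, lam, zero_sub]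
  rw [this]; exact hI.lam_mem _ hn
lemma rel_circ_right {x y : B} (a : B) (h : Rel N x y) : Rel N (x * a) (y * a) := by
  have hm : y⁻¹ * x ∈ N := circ_inv_mem hI h
  have hk : a⁻¹ * (y⁻¹ * x) * a ∈ N := by
    have := hI.circConj a⁻¹ hm; rwa [inv_inv] at this
  have hx : x * a = (y * a) * (a⁻¹ * (y⁻¹ * x) * a) := by
    rw [show x = y * (y⁻¹ * x) by rw [mul_inv_cancel_left]]
    group
  rw [Rel, hx, circ_eq (y*a)]
  have h3 := hI.addConj (y * a) (hI.lam_mem (y*a) hk)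
  simpa [sub_eq_add_neg] using h3
lemma rel_inv {x y : B} (h : Rel N x y) : Rel N x⁻¹ y⁻¹ := by
  have hm : y⁻¹ * x ∈ N := circ_inv_mem hI h
  have hk : y * (y⁻¹ * x)⁻¹ * y⁻¹ ∈ N := hI.circConj y (hI.inv_mem hm)
  have hx : x⁻¹ = y⁻¹ * (y * (y⁻¹ * x)⁻¹ * y⁻¹) := by
    rw [show x = y * (y⁻¹ * x) by rw [mul_inv_cancel_left]]
    group
  rw [Rel, hx, circ_eq y⁻¹]
  have h3 := hI.addConj y⁻¹ (hI.lam_mem y⁻¹ hk)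
  simpa [sub_eq_add_neg] using h3

end Ideals
section AnnStep
set_option linter.unusedSectionVars false
variable {B : Type*} [SkewBrace B] {N : Set B}

/-- One step of the annihilator series construction. -/
def annStep (N : Set B) : Set B :=
  {x | ∀ a : B, x * a - a * x ∈ N ∧ x * a - (x + a) ∈ N ∧ (x + a) - (a + x) ∈ N}

lemma annSeries_succ (n : ℕ) : annSeries B (n + 1) = annStep (annSeries B n) := rfl

variable (hI : IsIdeal N)
include hI

lemma mem_annStep_of_rel {x y : B} (hx : x ∈ annStep N) (hr : Rel N y x) : y ∈ annStep N := by
  intro a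
  refine ⟨?_, ?_, ?_⟩
  · exact rel_trans hI (rel_circ_right hI a hr)
      (rel_trans hI ((hx a).1) (rel_circ_left hI a (rel_symm hI hr)))
  · exact rel_trans hI (rel_circ_right hI a hr)
      (rel_trans hI ((hx a).2.1) (rel_add_right hI a (rel_symm hI hr)))
  · exact rel_trans hI (rel_add_right hI a hr)
      (rel_trans hI ((hx a).2.2) (rel_add_left hI a (rel_symm hI hr)))

lemma zero_mem_annStep : (0 : B) ∈ annStep N := by
  intro a
  refine ⟨?_, ?_, ?_⟩
  · rw [zero_circ, circ_zero, sub_self]; exact hI.zero_mem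
  · rw [zero_circ, zero_add, sub_self]; exact hI.zero_mem
  · rw [zero_add, add_zero, sub_self]; exact hI.zero_mem

lemma subset_annStep : N ⊆ annStep N := fun _ hn =>
  mem_annStep_of_rel hI (zero_mem_annStep hI) (rel_of_mem hI hn)

lemma add_mem_annStep {x y : B} (hx : x ∈ annStep N) (hy : y ∈ annStep N) :
    x + y ∈ annStep N := by
  have c2 : ∀ b : B, Rel N ((x + y) * b) ((x + y) + b) := by
    intro b
    have s2 : Rel N ((x + y) * b) ((x * y) * b) :=
      rel_circ_right hI b (rel_symm hI ((hx y).2.1))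
    rw [mul_assoc] at s2
    have s4 : Rel N (x + y * b) (x + (y + b)) := rel_add_left hI x ((hy b).2.1)
    have := rel_trans hI s2 (rel_trans hI ((hx (y * b)).2.1) s4)
    rwa [← add_assoc] at this
  intro a
  refine ⟨?_, ?_, ?_⟩
  · -- Rel ((x+y)*a) (a*(x+y))
    have e : a * (x + y) = a * x + (-a + a * y) := by
      rw [SkewBrace.circ_add, sub_eq_add_neg, add_assoc]
    have t1 : Rel N (a * x + (-a + a * y)) ((x + a) + (-a + a * y)) :=
      rel_add_right hI _ (rel_trans hI (rel_symm hI ((hx a).1)) ((hx a).2.1))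
    rw [show (x + a) + (-a + a * y) = x + a * y by
      rw [add_assoc, add_neg_cancel_left]] at t1
    have t2 : Rel N (x + a * y) (x + (y + a)) :=
      rel_add_left hI x (rel_trans hI (rel_symm hI ((hy a).1)) ((hy a).2.1))
    have t3 : Rel N (a * (x + y)) ((x + y) + a) := by
      rw [e]
      exact rel_trans hI t1 (by rwa [← add_assoc] at t2)
    exact rel_trans hI (c2 a) (rel_symm hI t3)
  · exact c2 a
  · -- Rel ((x+y)+a) (a+(x+y))
    have u1 : Rel N (x + (y + a)) (x + (a + y)) := rel_add_left hI x ((hy a).2.2)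
    have u2 : Rel N ((x + a) + y) ((a + x) + y) := rel_add_right hI y ((hx a).2.2)
    rw [add_assoc x a y, add_assoc a x y] at u2
    have := rel_trans hI u1 u2
    rwa [← add_assoc] at this

lemma inv_rel_neg {x : B} (hx : x ∈ annStep N) : Rel N x⁻¹ (-x) := by
  have h : Rel N (x * x⁻¹) (x + x⁻¹) := (hx x⁻¹).2.1
  rw [mul_inv_cancel, one_eq_zero] at h
  have hmem : x + x⁻¹ ∈ N := mem_of_rel_zero hI (rel_symm hI h)
  have h2 := hI.addConj (-x) hmem
  rw [show -x + (x + x⁻¹) - -x = x⁻¹ - -x by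
    rw [neg_add_cancel_left, sub_neg_eq_add]] at h2
  exact h2

lemma neg_mem_annStep {x : B} (hx : x ∈ annStep N) : -x ∈ annStep N := by
  have xinv := inv_rel_neg hI hx
  intro a
  have w1 : Rel N ((-x) * a) (x⁻¹ * a) := rel_circ_right hI a (rel_symm hI xinv)
  have w2 : Rel N (x⁻¹ * a) (-x + a) := by
    have h2 : Rel N (x * (x⁻¹ * a)) (x + x⁻¹ * a) := (hx (x⁻¹ * a)).2.1
    rw [mul_inv_cancel_left] at h2
    have h3 := rel_add_left hI (-x) h2
    rw [neg_add_cancel_left] at h3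
    exact rel_symm hI h3
  refine ⟨?_, rel_trans hI w1 w2, ?_⟩
  · -- Rel ((-x)*a) (a*(-x))
    have v1 : Rel N (a * (-x)) (a * x⁻¹) := rel_circ_left hI a (rel_symm hI xinv)
    have q : Rel N (x * a * x⁻¹) a := by
      have := rel_circ_right hI x⁻¹ ((hx a).1)
      rwa [mul_inv_cancel_right] at this
    have q2 := rel_circ_left hI x⁻¹ q
    rw [show x⁻¹ * (x * a * x⁻¹) = a * x⁻¹ by group] at q2
    exact rel_trans hI (rel_trans hI w1 (rel_symm hI q2)) (rel_symm hI v1)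
  · -- Rel (-x + a) (a + -x)
    have r := rel_add_left hI (-x) (rel_symm hI ((hx a).2.2))
    rw [neg_add_cancel_left] at r
    have r2 := rel_add_right hI (-a) r
    rw [add_neg_cancel] at r2
    have := mem_of_rel_zero hI r2
    rwa [show -x + (a + x) + -a = (-x + a) - (a + -x) by
      simp [sub_eq_add_neg, neg_add_rev, add_assoc, neg_neg]] at this

lemma isIdeal_annStep : IsIdeal (annStep N) := by
  refine ⟨⟨zero_mem_annStep hI, ?_, ?_, ?_, ?_⟩, ?_, ?_, ?_⟩
  · exact fun a ha b hb => add_mem_annStep hI ha hb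
  · exact fun a ha => neg_mem_annStep hI ha
  · exact fun a ha b hb =>
      mem_annStep_of_rel hI (add_mem_annStep hI ha hb) ((ha b).2.1)
  · exact fun a ha => mem_annStep_of_rel hI (neg_mem_annStep hI ha) (inv_rel_neg hI ha)
  · -- a + x - a
    intro a x hx
    have r := rel_add_right hI (-a) (rel_symm hI ((hx a).2.2))
    rw [add_neg_cancel_right] at r
    exact mem_annStep_of_rel hI hx (by rwa [sub_eq_add_neg])
  · -- a * x * a⁻¹
    intro a x hx
    have r := rel_circ_right hI a⁻¹ (rel_symm hI ((hx a).1))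
    rw [mul_inv_cancel_right] at r
    exact mem_annStep_of_rel hI hx r
  · -- lam a x
    intro a x hx
    have ax : Rel N (a * x) (a + x) :=
      rel_trans hI (rel_trans hI (rel_symm hI ((hx a).1)) ((hx a).2.1)) ((hx a).2.2)
    have r := rel_add_left hI (-a) ax
    rw [neg_add_cancel_left] at r
    exact mem_annStep_of_rel hI hx r

end AnnStep

section AnnSeries
variable {B : Type*} [SkewBrace B]

lemma isIdeal_singleton_zero : IsIdeal ({0} : Set B) := by
  refine ⟨⟨rfl, ?_, ?_, ?_, ?_⟩, ?_, ?_, ?_⟩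
  · intro a ha b hb; simp_all
  · intro a ha; simp_all
  · intro a ha b hb
    simp only [Set.mem_singleton_iff] at *
    subst ha; subst hb; rw [circ_zero]
  · intro a ha
    simp only [Set.mem_singleton_iff] at *
    subst ha; rw [← one_eq_zero, inv_one]
  · intro a i hi; simp_all
  · intro a i hi
    simp only [Set.mem_singleton_iff] at *
    subst hi; rw [circ_zero, mul_inv_cancel, one_eq_zero]
  · intro a i hi
    simp only [Set.mem_singleton_iff] at *
    subst hi; exact lam_zero a

lemma isIdeal_annSeries : ∀ n : ℕ, IsIdeal (annSeries B n)
  | 0 => isIdeal_singleton_zero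
  | n + 1 => by rw [annSeries_succ]; exact isIdeal_annStep (isIdeal_annSeries n)

lemma annSeries_subset_succ (n : ℕ) : annSeries B n ⊆ annSeries B (n + 1) := by
  rw [annSeries_succ]; exact subset_annStep (isIdeal_annSeries n)

lemma star_mem_left {p : ℕ} {x : B} (hx : x ∈ annSeries B (p + 1)) (y : B) :
    starOp x y ∈ annSeries B p := by
  have d : x * y - (x + y) ∈ annSeries B p := (hx y).2.1
  have e : starOp x y = -x + (x * y - (x + y)) - (-x) := by
    simp [starOp, sub_eq_add_neg, neg_add_rev, add_assoc, neg_neg]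
  rw [e]; exact (isIdeal_annSeries p).addConj (-x) d

lemma comm_mem_left {p : ℕ} {x : B} (hx : x ∈ annSeries B (p + 1)) (y : B) :
    x + y - x - y ∈ annSeries B p := by
  have := (hx y).2.2
  rwa [show (x + y) - (y + x) = x + y - x - y by
    simp [sub_eq_add_neg, neg_add_rev, add_assoc]] at this

lemma star_mem_right {p : ℕ} {y : B} (hy : y ∈ annSeries B (p + 1)) (x : B) :
    starOp x y ∈ annSeries B p := by
  have hI := isIdeal_annSeries (B := B) p
  have d : Rel (annSeries B p) (x * y) (x + y) :=
    rel_trans hI (rel_symm hI ((hy x).1)) (rel_trans hI ((hy x).2.1) ((hy x).2.2))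
  have e : starOp x y = -x + (x * y - (x + y)) - (-x) := by
    simp [starOp, sub_eq_add_neg, neg_add_rev, add_assoc, neg_neg]
  rw [e]; exact hI.addConj (-x) d

lemma comm_mem_right {p : ℕ} {y : B} (hy : y ∈ annSeries B (p + 1)) (x : B) :
    x + y - x - y ∈ annSeries B p := by
  have := (isIdeal_annSeries (B := B) p).neg_mem ((hy x).2.2)
  rwa [show -((y + x) - (x + y)) = x + y - x - y by
    simp [sub_eq_add_neg, neg_add_rev, add_assoc, neg_neg]] at this

end AnnSeries
section Gamma
variable {B : Type*} [SkewBrace B]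

lemma gammaAux_zero : gammaAux B 0 = (Set.univ : Set B) := by rw [gammaAux]

lemma mem_gammaAux_zero (x : B) : x ∈ gammaAux B 0 := by rw [gammaAux_zero]; trivial

lemma gammaAux_succ (n : ℕ) :
    gammaAux B (n + 1) = (AddSubgroup.closure (⋃ j : Fin (n + 1),
      {z : B | ∃ x ∈ gammaAux B j.1, ∃ y ∈ gammaAux B (n - j.1),
        z = starOp x y ∨ z = x + y - x - y}) : AddSubgroup B) := by
  rw [gammaAux]

lemma mem_gammaAux_gen {n i : ℕ} (hi : i ≤ n) {x y z : B}
    (hx : x ∈ gammaAux B i) (hy : y ∈ gammaAux B (n - i))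
    (hz : z = starOp x y ∨ z = x + y - x - y) : z ∈ gammaAux B (n + 1) := by
  rw [gammaAux_succ]
  exact AddSubgroup.subset_closure
    (Set.mem_iUnion.2 ⟨⟨i, Nat.lt_succ_of_le hi⟩, x, hx, y, hy, hz⟩)

lemma zero_mem_gammaAux (n : ℕ) : (0 : B) ∈ gammaAux B n := by
  cases n with
  | zero => exact mem_gammaAux_zero _
  | succ m => rw [gammaAux_succ]; exact (AddSubgroup.closure _).zero_mem

lemma add_mem_gammaAux {n : ℕ} {x y : B} (hx : x ∈ gammaAux B n) (hy : y ∈ gammaAux B n) :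
    x + y ∈ gammaAux B n := by
  cases n with
  | zero => exact mem_gammaAux_zero _
  | succ m =>
    rw [gammaAux_succ] at *
    exact (AddSubgroup.closure _).add_mem hx hy

lemma neg_mem_gammaAux {n : ℕ} {x : B} (hx : x ∈ gammaAux B n) : -x ∈ gammaAux B n := by
  cases n with
  | zero => exact mem_gammaAux_zero _
  | succ m =>
    rw [gammaAux_succ] at *
    exact (AddSubgroup.closure _).neg_mem hx

lemma gammaAux_succ_subset : ∀ n : ℕ, gammaAux B (n + 1) ⊆ gammaAux B n := by
  intro n
  induction n using Nat.strong_induction_on with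
  | _ n ih =>
    match n with
    | 0 => exact fun x _ => mem_gammaAux_zero _
    | m + 1 =>
      rw [gammaAux_succ (m + 1)]
      intro z hz
      refine (AddSubgroup.closure_le
        ⟨⟨⟨gammaAux B (m + 1), fun {a b} ha hb => add_mem_gammaAux ha hb⟩,
          zero_mem_gammaAux _⟩, fun {a} ha => neg_mem_gammaAux ha⟩).2 ?_ hz
      rintro w hw
      simp only [Set.mem_iUnion, Set.mem_setOf_eq] at hw
      obtain ⟨⟨i, hi⟩, x, hx, y, hy, hzeq⟩ := hw
      by_cases him : i ≤ m
      · have hy' : y ∈ gammaAux B (m - i) := by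
          have : m + 1 - i = (m - i) + 1 := by omega
          rw [this] at hy
          exact ih (m - i) (by omega) hy
        exact mem_gammaAux_gen him hx hy' hzeq
      · have him' : i = m + 1 := by omega
        subst him'
        have hx' : x ∈ gammaAux B m := ih m (by omega) hx
        have hy' : y ∈ gammaAux B (m - m) := by
          rw [Nat.sub_self]; exact mem_gammaAux_zero _
        exact mem_gammaAux_gen (le_refl m) hx' hy' (by
          rw [Nat.sub_self] at *
          exact hzeq)
      -- note: hy at i = m+1 : y ∈ gammaAux B (m+1 - (m+1)) = gammaAux B 0, unused

lemma gammaAux_le {i j : ℕ} (h : i ≤ j) : gammaAux B j ⊆ gammaAux B i := by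
  induction j with
  | zero => rw [Nat.le_zero.1 h]
  | succ m ih =>
    rcases Nat.lt_or_ge i (m + 1) with hlt | hge
    · exact fun x hx => ih (by omega) (gammaAux_succ_subset m hx)
    · have : i = m + 1 := by omega
      rw [this]

end Gamma
section Main
variable {B : Type*} [SkewBrace B]

lemma ann_nilpotent_forward (h : AnnNilpotent B) :
    ∃ c : ℕ, 1 ≤ c ∧ gammaBr B c = ({0} : Set B) := by
  obtain ⟨n, hn⟩ := h
  have claim : ∀ k : ℕ, k ≤ n → gammaAux B (2 ^ k - 1) ⊆ annSeries B (n - k) := by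
    intro k
    induction k with
    | zero =>
      intro _
      rw [show (2 : ℕ) ^ 0 - 1 = 0 from rfl, Nat.sub_zero, hn, gammaAux_zero]
    | succ k ih =>
      intro hk
      have ihk := ih (by omega)
      have hpow : (2 : ℕ) ^ (k + 1) = 2 ^ k * 2 := pow_succ 2 k
      have h1 : (1 : ℕ) ≤ 2 ^ k := Nat.one_le_two_pow
      have h2 : 2 ^ (k + 1) - 1 = 2 * (2 ^ k - 1) + 1 := by omega
      rw [h2, gammaAux_succ (2 * (2 ^ k - 1))]
      have hId := isIdeal_annSeries (B := B) (n - (k + 1))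
      intro z hz
      refine (AddSubgroup.closure_le (idealSubgroup hId)).2 ?_ hz
      rintro w hw
      simp only [Set.mem_iUnion, Set.mem_setOf_eq] at hw
      obtain ⟨⟨i, hi⟩, x, hx, y, hy, hzeq⟩ := hw
      have hnk : n - k = (n - (k + 1)) + 1 := by omega
      rcases le_or_gt (2 ^ k - 1) i with hMi | hiM
      · have hx' : x ∈ annSeries B ((n - (k + 1)) + 1) := by
          rw [← hnk]; exact ihk (gammaAux_le hMi hx)
        rcases hzeq with rfl | rfl
        · exact star_mem_left hx' y
        · exact comm_mem_left hx' y
      · have hy2 : (2 : ℕ) ^ k - 1 ≤ 2 * (2 ^ k - 1) - i := by omega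
        have hy' : y ∈ annSeries B ((n - (k + 1)) + 1) := by
          rw [← hnk]; exact ihk (gammaAux_le hy2 hy)
        rcases hzeq with rfl | rfl
        · exact star_mem_right hy' x
        · exact comm_mem_right hy' x
  refine ⟨2 ^ n, Nat.one_le_two_pow, ?_⟩
  have h0 := claim n le_rfl
  rw [Nat.sub_self] at h0
  show gammaAux B (2 ^ n - 1) = ({0} : Set B)
  apply Set.eq_of_subset_of_subset
  · exact h0
  · intro x hx
    rw [Set.mem_singleton_iff] at hx
    subst hx
    exact zero_mem_gammaAux _

lemma ann_nilpotent_backward {c : ℕ} (hc : 1 ≤ c) (h : gammaBr B c = ({0} : Set B)) :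
    AnnNilpotent B := by
  have h' : gammaAux B (c - 1) = {0} := h
  have claim : ∀ k : ℕ, k ≤ c - 1 → gammaAux B (c - 1 - k) ⊆ annSeries B k := by
    intro k
    induction k with
    | zero =>
      intro _
      rw [Nat.sub_zero, h']
      exact fun x hx => hx
    | succ k ih =>
      intro hk
      have ihk := ih (by omega)
      have hm1 : c - 1 - k = (c - 1 - (k + 1)) + 1 := by omega
      rw [hm1] at ihk
      set m := c - 1 - (k + 1) with hm
      intro x hx
      intro a
      -- generator memberships in gammaAux B (m+1)
      have h0a : a ∈ gammaAux B (m - m) := by rw [Nat.sub_self]; exact mem_gammaAux_zero a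
      have hx0 : x ∈ gammaAux B (m - 0) := by rw [Nat.sub_zero]; exact hx
      have hs : starOp x a ∈ gammaAux B (m + 1) :=
        mem_gammaAux_gen (le_refl m) hx h0a (Or.inl rfl)
      have ht : starOp a x ∈ gammaAux B (m + 1) :=
        mem_gammaAux_gen (Nat.zero_le m) (mem_gammaAux_zero a) hx0 (Or.inl rfl)
      have hcomm_xa : x + a - x - a ∈ gammaAux B (m + 1) :=
        mem_gammaAux_gen (le_refl m) hx h0a (Or.inr rfl)
      have hcomm_sx : (-(starOp x a)) + x - (-(starOp x a)) - x ∈ gammaAux B (m + 1) :=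
        mem_gammaAux_gen (Nat.zero_le m) (mem_gammaAux_zero (-(starOp x a))) hx0 (Or.inr rfl)
      have htm : starOp a x ∈ gammaAux B m := gammaAux_succ_subset m ht
      have hcomm_ta : starOp a x + a - starOp a x - a ∈ gammaAux B (m + 1) :=
        mem_gammaAux_gen (le_refl m) htm h0a (Or.inr rfl)
      have A2 : x * a - (x + a) ∈ gammaAux B (m + 1) := by
        rw [show x * a - (x + a)
            = starOp x a + ((-(starOp x a)) + x - (-(starOp x a)) - x) by
          rw [circ_eq_star x a]
          simp [sub_eq_add_neg, neg_add_rev, add_assoc, neg_neg]]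
        exact add_mem_gammaAux hs hcomm_sx
      have A3 : (x + a) - (a + x) ∈ gammaAux B (m + 1) := by
        rw [show (x + a) - (a + x) = x + a - x - a by
          simp [sub_eq_add_neg, neg_add_rev, add_assoc]]
        exact hcomm_xa
      have A1 : x * a - a * x ∈ gammaAux B (m + 1) := by
        rw [show x * a - a * x
            = (starOp x a + ((-(starOp x a)) + x - (-(starOp x a)) - x))
              + (x + a - x - a)
              + ((-(starOp a x)) + (starOp a x + a - starOp a x - a)) by
          rw [circ_eq_star x a, circ_eq_star a x]
          simp [sub_eq_add_neg, neg_add_rev, add_assoc, neg_neg]]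
        exact add_mem_gammaAux (add_mem_gammaAux (add_mem_gammaAux hs hcomm_sx) hcomm_xa)
          (add_mem_gammaAux (neg_mem_gammaAux ht) hcomm_ta)
      exact ⟨ihk A1, ihk A2, ihk A3⟩
  have final := claim (c - 1) le_rfl
  rw [Nat.sub_self] at final
  refine ⟨c - 1, Set.eq_univ_of_univ_subset ?_⟩
  rw [← gammaAux_zero]
  exact final

end Main

/-- Theorem 2.12: `B` is annihilator nilpotent if and only if `Γ_[c](B) = 0`
for some positive integer `c`. -/
theorem stmt4 {B : Type*} [SkewBrace B] :
    AnnNilpotent B ↔ ∃ c : ℕ, 1 ≤ c ∧ gammaBr B c = ({0} : Set B) := by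
  constructor
  · exact ann_nilpotent_forward
  · rintro ⟨c, hc, h⟩
    exact ann_nilpotent_backward hc h

end SkewBrace
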